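/- For every m ∈ (0,1) there exist distinct points x₁, x₂ ∈ (−π/2, π/2) such that γ_o(x₁|m) = γ_o(x₂|m); that is, every orbitlike parametrization has a self-intersection in (−π/2, π/2). -/

import Mathlib

open Real MeasureTheory Set

noncomputable section

abbrev E2 := EuclideanSpace ℝ (Fin 2)

/-- The point of the Euclidean plane with coordinates `(a, b)`. -/
def mkE2 (a b : ℝ) : E2 := WithLp.toLp 2 ![a, b]
/-- Incomplete elliptic integral of the first kind `F(x,m)`. -/
def Fell (x m : ℝ) : ℝ := ∫ θ in (0:ℝ)..x, 1 / Real.sqrt (1 - m * Real.sin θ ^ 2)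

/-- Incomplete elliptic integral of the second kind `E(x,m)`. -/
def Eell (x m : ℝ) : ℝ := ∫ θ in (0:ℝ)..x, Real.sqrt (1 - m * Real.sin θ ^ 2)

/-- Complete elliptic integral of the first kind `K(m)`. -/
def Kc (m : ℝ) : ℝ := Fell (Real.pi / 2) m

/-- Complete elliptic integral of the second kind `E(m)`. -/
def Ec (m : ℝ) : ℝ := Eell (Real.pi / 2) m

/-- `α(m) = arcsin √(1/(2m))`. -/
def alph (m : ℝ) : ℝ := Real.arcsin (Real.sqrt (1 / (2 * m)))

/-- `G(x,m) = ∫₀ˣ (1 − 2m sin²θ)(1 − m sin²θ)^{−1/2} dθ = 2E(x,m) − F(x,m)`. -/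
def Gw (x m : ℝ) : ℝ :=
  ∫ θ in (0:ℝ)..x, (1 - 2 * m * Real.sin θ ^ 2) / Real.sqrt (1 - m * Real.sin θ ^ 2)

/-- `f(m) = ∫₀^{π−α(m)} (1 − 2m sin²θ)(1 − m sin²θ)^{−1/2} dθ`; its unique zero is `m_T`. -/
def fT (m : ℝ) : ℝ := Gw (Real.pi - alph m) m
/-- First component of the orbitlike parametrization. -/
def gammaO1 (m : ℝ) : ℝ → ℝ := fun x => (2 * Eell x m + (m - 2) * Fell x m) / m

/-- Second component of the orbitlike parametrization. -/
def gammaO2 (m : ℝ) : ℝ → ℝ := fun x => -2 * Real.sqrt (1 - m * Real.sin x ^ 2) / m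

/-- The orbitlike parametrization `γ_o(x|m) = (1/m)(2E(x,m) + (m−2)F(x,m), −2√(1 − m sin²x))`. -/
def gammaO (m : ℝ) : ℝ → E2 := fun x => mkE2 (gammaO1 m x) (gammaO2 m x)

/-! Since `2√w + (m − 2)/√w = m cos 2θ / √w` for `w = 1 − m sin²θ`, the abscissa of `γ_o(·|m)` is the
odd function `x ↦ ∫₀ˣ cos 2θ / √(1 − m sin²θ) dθ`, while its ordinate is even; so any zero `x ≠ 0` of the
abscissa gives the self-intersection `γ_o(x|m) = γ_o(−x|m)`. The abscissa is positive at `π/4`, and it is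
negative at `π/2` because reflecting `θ ↦ π/2 − θ` pairs the positive part of the integrand on `(0, π/4)`
with a negative part of larger size on `(π/4, π/2)`. -/

lemma intervalIntegral.integral_zero_neg_of_even {f : ℝ → ℝ} (hf : ∀ t, f (-t) = f t) (x : ℝ) :
    ∫ θ in (0:ℝ)..(-x), f θ = -∫ θ in (0:ℝ)..x, f θ := by
  calc ∫ θ in (0:ℝ)..(-x), f θ = ∫ θ in (0:ℝ)..(-x), f (-θ) := by simp only [hf]
    _ = -∫ θ in (0:ℝ)..x, f θ := by
      rw [intervalIntegral.integral_comp_neg, neg_neg, neg_zero, intervalIntegral.integral_symm]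

lemma intervalIntegral.integral_eq_integral_add_reflect {f : ℝ → ℝ} (hf : Continuous f) (a b : ℝ) :
    ∫ x in a..b, f x = ∫ x in a..(a + b) / 2, (f x + f (a + b - x)) := by
  rw [intervalIntegral.integral_add (hf.intervalIntegrable _ _)
    ((by fun_prop : Continuous fun x => f (a + b - x)).intervalIntegrable _ _),
    intervalIntegral.integral_comp_sub_left f (a + b), add_sub_cancel_left,
    show a + b - (a + b) / 2 = (a + b) / 2 by ring,
    intervalIntegral.integral_add_adjacent_intervals (hf.intervalIntegrable _ _)
      (hf.intervalIntegrable _ _)]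

section Orbitlike

variable {m : ℝ}

lemma one_sub_mul_sin_sq_pos (hm : m < 1) (θ : ℝ) : 0 < 1 - m * sin θ ^ 2 := by
  rcases le_or_gt m 0 with hm0 | hm0
  · nlinarith [sq_nonneg (sin θ)]
  · nlinarith [sin_sq_le_one θ]

lemma continuous_cos_two_mul_div_sqrt (hm : m < 1) :
    Continuous fun θ => cos (2 * θ) / √(1 - m * sin θ ^ 2) :=
  (continuous_cos.comp (continuous_const.mul continuous_id)).div (by fun_prop)
    fun θ => (sqrt_pos.2 (one_sub_mul_sin_sq_pos hm θ)).ne'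

lemma gammaO1_eq_integral (hm0 : m ≠ 0) (hm : m < 1) (x : ℝ) :
    gammaO1 m x = ∫ θ in (0:ℝ)..x, cos (2 * θ) / √(1 - m * sin θ ^ 2) := by
  have hw : Continuous fun θ => √(1 - m * sin θ ^ 2) := by fun_prop
  have hw0 : ∀ θ, √(1 - m * sin θ ^ 2) ≠ 0 :=
    fun θ => (sqrt_pos.2 (one_sub_mul_sin_sq_pos hm θ)).ne'
  rw [gammaO1, Eell, Fell, ← intervalIntegral.integral_const_mul,
    ← intervalIntegral.integral_const_mul,
    ← intervalIntegral.integral_add (f := fun θ => 2 * √(1 - m * sin θ ^ 2))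
      (g := fun θ => (m - 2) * (1 / √(1 - m * sin θ ^ 2)))
      ((continuous_const.mul hw).intervalIntegrable _ _)
      ((continuous_const.mul (continuous_const.div hw hw0)).intervalIntegrable _ _),
    ← intervalIntegral.integral_div]
  refine intervalIntegral.integral_congr fun θ _ => ?_
  have hsq := sq_sqrt (one_sub_mul_sin_sq_pos hm θ).le
  have hs0 := hw0 θ
  rw [cos_two_mul, cos_sq']
  field_simp
  linear_combination 2 * hsq

lemma continuous_gammaO1 (hm0 : m ≠ 0) (hm : m < 1) : Continuous (gammaO1 m) := by
  rw [funext (gammaO1_eq_integral hm0 hm)]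
  exact intervalIntegral.continuous_primitive
    (fun a b => (continuous_cos_two_mul_div_sqrt hm).intervalIntegrable a b) 0

lemma gammaO1_neg (x : ℝ) : gammaO1 m (-x) = -gammaO1 m x := by
  simp only [gammaO1, Eell, Fell,
    intervalIntegral.integral_zero_neg_of_even (f := fun θ => √(1 - m * sin θ ^ 2))
      (by simp [sin_neg]),
    intervalIntegral.integral_zero_neg_of_even (f := fun θ => 1 / √(1 - m * sin θ ^ 2))
      (by simp [sin_neg])]
  ring

lemma gammaO2_neg (x : ℝ) : gammaO2 m (-x) = gammaO2 m x := by
  simp [gammaO2, sin_neg]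

lemma gammaO1_pi_div_four_pos (hm0 : m ≠ 0) (hm : m < 1) : 0 < gammaO1 m (π / 4) := by
  rw [gammaO1_eq_integral hm0 hm]
  refine intervalIntegral.intervalIntegral_pos_of_pos_on
    ((continuous_cos_two_mul_div_sqrt hm).intervalIntegrable _ _) (fun θ hθ => ?_) (by positivity)
  have hcos : 0 < cos (2 * θ) := cos_pos_of_mem_Ioo ⟨by linarith [hθ.1, pi_pos], by linarith [hθ.2]⟩
  exact div_pos hcos (sqrt_pos.2 (one_sub_mul_sin_sq_pos hm θ))

lemma cos_two_mul_div_sqrt_add_reflect_neg (hm0 : 0 < m) (hm : m < 1) {θ : ℝ}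
    (hθ : θ ∈ Ioo 0 (π / 4)) :
    cos (2 * θ) / √(1 - m * sin θ ^ 2)
      + cos (2 * (π / 2 - θ)) / √(1 - m * sin (π / 2 - θ) ^ 2) < 0 := by
  have hcos : 0 < cos (2 * θ) := cos_pos_of_mem_Ioo ⟨by linarith [hθ.1, pi_pos], by linarith [hθ.2]⟩
  have hsin_lt_cos : sin θ ^ 2 < cos θ ^ 2 := by
    nlinarith [cos_sq' θ, cos_two_mul θ]
  rw [show 2 * (π / 2 - θ) = π - 2 * θ by ring, cos_pi_sub, sin_pi_div_two_sub, neg_div,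
    ← sub_eq_add_neg, sub_neg]
  have hpos : 0 < 1 - m * cos θ ^ 2 := by
    simpa only [sin_pi_div_two_sub] using one_sub_mul_sin_sq_pos hm (π / 2 - θ)
  exact div_lt_div_of_pos_left hcos (sqrt_pos.2 hpos)
    (sqrt_lt_sqrt hpos.le (by nlinarith [mul_lt_mul_of_pos_left hsin_lt_cos hm0]))

lemma gammaO1_pi_div_two_neg (hm0 : 0 < m) (hm : m < 1) : gammaO1 m (π / 2) < 0 := by
  rw [gammaO1_eq_integral hm0.ne' hm, intervalIntegral.integral_eq_integral_add_reflect
    (continuous_cos_two_mul_div_sqrt hm), zero_add, show π / 2 / 2 = π / 4 by ring, ← neg_pos,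
    ← intervalIntegral.integral_neg]
  have hcont := continuous_cos_two_mul_div_sqrt hm
  refine intervalIntegral.intervalIntegral_pos_of_pos_on
    ((hcont.add (hcont.comp (continuous_const.sub continuous_id))).neg.intervalIntegrable _ _)
    (fun θ hθ => neg_pos.2 (cos_two_mul_div_sqrt_add_reflect_neg hm0 hm hθ)) (by positivity)

end Orbitlike

/-- Lemma 2.26: for every `m ∈ (0,1)` the orbitlike parametrization
`γ_o(·|m)` has a self-intersection with parameters in `(−π/2, π/2)`. -/
theorem stmt17 (m : ℝ) (hm : m ∈ Set.Ioo (0:ℝ) 1) :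
    ∃ x₁ ∈ Set.Ioo (-(Real.pi / 2)) (Real.pi / 2),
      ∃ x₂ ∈ Set.Ioo (-(Real.pi / 2)) (Real.pi / 2),
        x₁ ≠ x₂ ∧ gammaO m x₁ = gammaO m x₂ := by
  obtain ⟨hm0, hm1⟩ := hm
  obtain ⟨x, ⟨hx₁, hx₂⟩, hx⟩ := intermediate_value_Ioo' (by linarith [pi_pos] : π / 4 ≤ π / 2)
    (continuous_gammaO1 hm0.ne' hm1).continuousOn
    ⟨gammaO1_pi_div_two_neg hm0 hm1, gammaO1_pi_div_four_pos hm0.ne' hm1⟩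
  have hx₀ : 0 < x := by linarith [pi_pos]
  refine ⟨x, ⟨by linarith, hx₂⟩, -x, ⟨by linarith, by linarith⟩, by linarith, ?_⟩
  rw [gammaO, gammaO, gammaO1_neg, gammaO2_neg, hx, neg_zero]
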